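/- Let f be an NE approximator that is opponent-permutation-invariant (f(ρ_i u)_j = f(u)_j for all j ≠ i and permutations ρ_i). If the payoff distribution D is permutation-invariant, then the player-equivariance projection P f satisfies E_{u∼D}[E(Pf(u), u)] ≤ E_{u∼D}[E(f(u), u)], where P = P_1 ∘ ... ∘ P_n with (P_i f)(u)_i = (1/|A_i|!) Σ_{ρ_i} ρ_i^{-1} f(ρ_i u)_i and (P_i f)(u)_j = f(u)_j for j ≠ i. -/

import Mathlib

open Finset MeasureTheory

variable {n : ℕ} [NeZero n]
variable {A : Fin n → Type*} [∀ i, Fintype (A i)] [∀ i, DecidableEq (A i)]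
  [∀ i, Nonempty (A i)]

/-- Expected utility of player `j` under product strategy `σ`. -/
def EU (u : Fin n → (∀ i, A i) → ℝ) (σ : ∀ i, A i → ℝ) (j : Fin n) : ℝ :=
  ∑ a : ∀ i, A i, u j a * ∏ k, σ k (a k)

/-- The point-mass (pure) strategy on action `b`. -/
def pureStrat {α : Type*} [DecidableEq α] (b : α) : α → ℝ :=
  fun c => if c = b then 1 else 0

/-- `u_i(b, σ_{-i})`. -/
def BR (u : Fin n → (∀ i, A i) → ℝ) (σ : ∀ i, A i → ℝ) (i : Fin n) (b : A i) : ℝ :=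
  EU u (Function.update σ i (pureStrat b)) i

/-- `(ρ_i u)_j(a_i, a_{-i}) = u_j(ρ_i⁻¹ a_i, a_{-i})`. -/
def permPayoff (i : Fin n) (ρ : Equiv.Perm (A i)) (u : Fin n → (∀ i, A i) → ℝ) :
    Fin n → (∀ i, A i) → ℝ :=
  fun j a => u j (Function.update a i (ρ.symm (a i)))

/-- NE exploitability `E(σ,u) = max_{i,a_i} (u_i(a_i, σ_{-i}) - u_i(σ))`. -/
noncomputable def NEExpl (u : Fin n → (∀ i, A i) → ℝ) (σ : ∀ i, A i → ℝ) : ℝ :=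
  univ.sup' Finset.univ_nonempty fun i =>
    univ.sup' Finset.univ_nonempty fun b : A i => BR u σ i b - EU u σ i

/-- `(P_i f)(u)_i = (1/|A_i|!) Σ_{ρ_i ∈ G_i} ρ_i⁻¹ f(ρ_i u)_i` and
`(P_i f)(u)_j = f(u)_j` for `j ≠ i`. -/
noncomputable def Pproj (i : Fin n)
    (f : (Fin n → (∀ i, A i) → ℝ) → (∀ k, A k → ℝ)) :
    (Fin n → (∀ i, A i) → ℝ) → (∀ k, A k → ℝ) :=
  fun u => Function.update (f u) i
    (fun b => (∑ ρ : Equiv.Perm (A i), f (permPayoff i ρ u) i (ρ b)) /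
      (Fintype.card (Equiv.Perm (A i)) : ℝ))

/-- `P = P_1 ∘ P_2 ∘ ... ∘ P_n`. -/
noncomputable def Pall (f : (Fin n → (∀ i, A i) → ℝ) → (∀ k, A k → ℝ)) :
    (Fin n → (∀ i, A i) → ℝ) → (∀ k, A k → ℝ) :=
  (List.finRange n).foldr (fun i g => Pproj i g) f

/-! ### Auxiliary development -/

/-- Simultaneous permutation of all players' payoffs. -/
def PhiAll (ρ : ∀ k, Equiv.Perm (A k)) (u : Fin n → (∀ i, A i) → ℝ) :
    Fin n → (∀ i, A i) → ℝ :=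
  fun j a => u j (fun k => (ρ k).symm (a k))

lemma PhiAll_one : (PhiAll (fun k => (1 : Equiv.Perm (A k)))) = id := by
  funext u j a
  simp [PhiAll]
  rfl

lemma PhiAll_outside (ρ : ∀ k, Equiv.Perm (A k)) (j : Fin n) :
    PhiAll ρ = permPayoff j (ρ j) ∘ PhiAll (Function.update ρ j 1) := by
  funext u m a
  simp only [Function.comp_apply, permPayoff, PhiAll]
  congr 1
  funext t
  rcases eq_or_ne t j with rfl | ht
  · simp; rfl
  · simp [Function.update_of_ne ht]

lemma PhiAll_inside (ρ : ∀ k, Equiv.Perm (A k)) (k : Fin n)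
    (u : Fin n → (∀ i, A i) → ℝ) :
    PhiAll ρ u = PhiAll (Function.update ρ k 1) (permPayoff k (ρ k) u) := by
  funext j a
  simp only [PhiAll, permPayoff]
  congr 1
  funext t
  rcases eq_or_ne t k with rfl | ht
  · simp; rfl
  · simp [Function.update_of_ne ht]

lemma measurable_permPayoff (i : Fin n) (ρ : Equiv.Perm (A i)) :
    Measurable (permPayoff i ρ : (Fin n → (∀ i, A i) → ℝ) → _) :=
  measurable_pi_lambda _ fun j => measurable_pi_lambda _ fun a =>
    (measurable_pi_apply _).comp (measurable_pi_apply j)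

lemma measurable_PhiAll (ρ : ∀ k, Equiv.Perm (A k)) :
    Measurable (PhiAll ρ : (Fin n → (∀ i, A i) → ℝ) → _) :=
  measurable_pi_lambda _ fun j => measurable_pi_lambda _ fun a =>
    (measurable_pi_apply _).comp (measurable_pi_apply j)

lemma map_PhiAll (D : Measure (Fin n → (∀ i, A i) → ℝ))
    (hD : ∀ (i : Fin n) (ρ : Equiv.Perm (A i)), D.map (permPayoff i ρ) = D)
    (ρ : ∀ k, Equiv.Perm (A k)) : D.map (PhiAll ρ) = D := by
  have key : ∀ s : Finset (Fin n), ∀ ρ : ∀ k, Equiv.Perm (A k),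
      (∀ m ∉ s, ρ m = 1) → D.map (PhiAll ρ) = D := by
    intro s
    induction s using Finset.induction_on with
    | empty =>
      intro ρ hρ
      have : ρ = fun k => 1 := funext fun m => hρ m (Finset.notMem_empty m)
      rw [this, PhiAll_one, Measure.map_id]
    | @insert j s hj ih =>
      intro ρ hρ
      rw [PhiAll_outside ρ j,
        ← Measure.map_map (measurable_permPayoff j (ρ j)) (measurable_PhiAll _),
        ih _ ?_, hD]
      intro m hm
      rcases eq_or_ne m j with rfl | hmj
      · simp
      · rw [Function.update_of_ne hmj]
        exact hρ m (by simp [hmj, hm])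
  exact key univ ρ (fun m hm => absurd (mem_univ m) hm)

lemma f_PhiAll (f : (Fin n → (∀ i, A i) → ℝ) → (∀ k, A k → ℝ))
    (hOPI : ∀ (u : Fin n → (∀ i, A i) → ℝ) (i : Fin n) (ρ : Equiv.Perm (A i))
      (j : Fin n), j ≠ i → f (permPayoff i ρ u) j = f u j)
    (k : Fin n) (ρ : ∀ m, Equiv.Perm (A m)) (hk1 : ρ k = 1)
    (v : Fin n → (∀ i, A i) → ℝ) : f (PhiAll ρ v) k = f v k := by
  have key : ∀ s : Finset (Fin n), k ∉ s → ∀ ρ : ∀ m, Equiv.Perm (A m),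
      (∀ m ∉ s, ρ m = 1) → ∀ v, f (PhiAll ρ v) k = f v k := by
    intro s
    induction s using Finset.induction_on with
    | empty =>
      intro _ ρ hρ v
      have : ρ = fun m => 1 := funext fun m => hρ m (Finset.notMem_empty m)
      rw [this, PhiAll_one, id_eq]
    | @insert j s hj ih =>
      intro hk ρ hρ v
      have hkj : k ≠ j := fun h => hk (by simp [h])
      have hks : k ∉ s := fun h => hk (Finset.mem_insert_of_mem h)
      rw [PhiAll_outside ρ j, Function.comp_apply, hOPI _ j (ρ j) k hkj]
      refine ih hks _ ?_ v
      intro m hm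
      rcases eq_or_ne m j with rfl | hmj
      · simp
      · rw [Function.update_of_ne hmj]
        exact hρ m (by simp [hmj, hm])
  refine key (univ.erase k) (Finset.notMem_erase k univ) ρ ?_ v
  intro m hm
  have : m = k := by
    by_contra hmk
    exact hm (Finset.mem_erase.mpr ⟨hmk, mem_univ m⟩)
  rw [this, hk1]

lemma f_coord (f : (Fin n → (∀ i, A i) → ℝ) → (∀ k, A k → ℝ))
    (hOPI : ∀ (u : Fin n → (∀ i, A i) → ℝ) (i : Fin n) (ρ : Equiv.Perm (A i))
      (j : Fin n), j ≠ i → f (permPayoff i ρ u) j = f u j)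
    (ρ : ∀ m, Equiv.Perm (A m)) (u : Fin n → (∀ i, A i) → ℝ) (k : Fin n) :
    f (PhiAll ρ u) k = f (permPayoff k (ρ k) u) k := by
  rw [PhiAll_inside ρ k u]
  exact f_PhiAll f hOPI k _ (Function.update_self k 1 ρ) _

/-! ### `EU`, `BR`, `NEExpl` under permutation -/

lemma EU_perm (u : Fin n → (∀ i, A i) → ℝ) (ρ : ∀ k, Equiv.Perm (A k))
    (τ : ∀ k, A k → ℝ) (j : Fin n) :
    EU u (fun k b => τ k (ρ k b)) j = EU (PhiAll ρ u) τ j := by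
  unfold EU PhiAll
  refine Fintype.sum_equiv (Equiv.piCongrRight ρ) _ _ fun a => ?_
  simp [Equiv.piCongrRight]

lemma BR_perm (u : Fin n → (∀ i, A i) → ℝ) (ρ : ∀ k, Equiv.Perm (A k))
    (τ : ∀ k, A k → ℝ) (i : Fin n) (b : A i) :
    BR u (fun k c => τ k (ρ k c)) i b = BR (PhiAll ρ u) τ i (ρ i b) := by
  unfold BR
  have h : Function.update (fun k c => τ k (ρ k c)) i (pureStrat b)
      = fun k c => (Function.update τ i (pureStrat (ρ i b))) k (ρ k c) := by
    funext k c
    rcases eq_or_ne k i with rfl | h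
    · simp [pureStrat]
    · simp [Function.update_of_ne h]
  rw [h, EU_perm]

lemma NEExpl_perm (u : Fin n → (∀ i, A i) → ℝ) (ρ : ∀ k, Equiv.Perm (A k))
    (τ : ∀ k, A k → ℝ) :
    NEExpl u (fun k c => τ k (ρ k c)) = NEExpl (PhiAll ρ u) τ := by
  unfold NEExpl
  refine Finset.sup'_congr _ rfl fun i _ => ?_
  have h : (fun b : A i => BR u (fun k c => τ k (ρ k c)) i b
        - EU u (fun k c => τ k (ρ k c)) i)
      = fun b => BR (PhiAll ρ u) τ i (ρ i b) - EU (PhiAll ρ u) τ i := by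
    funext b; rw [BR_perm, EU_perm]
  rw [h]
  apply le_antisymm
  · exact Finset.sup'_le _ _ fun b _ =>
      Finset.le_sup' (fun c => BR (PhiAll ρ u) τ i c - EU (PhiAll ρ u) τ i)
        (mem_univ (ρ i b))
  · refine Finset.sup'_le _ _ fun b _ => ?_
    have := Finset.le_sup'
      (fun c => BR (PhiAll ρ u) τ i (ρ i c) - EU (PhiAll ρ u) τ i)
      (mem_univ ((ρ i).symm b))
    simp only [Equiv.apply_symm_apply] at this
    exact this

/-! ### Averaging lemmas -/

lemma EU_avg (u : Fin n → (∀ i, A i) → ℝ)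
    (x : ∀ k, Equiv.Perm (A k) → A k → ℝ) (j : Fin n) :
    EU u (fun k b => (∑ ρ : Equiv.Perm (A k), x k ρ b) /
        (Fintype.card (Equiv.Perm (A k)) : ℝ)) j
    = (∑ ρ : ∀ k, Equiv.Perm (A k), EU u (fun k => x k (ρ k)) j) /
        (Fintype.card (∀ k, Equiv.Perm (A k)) : ℝ) := by
  unfold EU
  have hM : (Fintype.card (∀ k, Equiv.Perm (A k)) : ℝ)
      = ∏ k, (Fintype.card (Equiv.Perm (A k)) : ℝ) := by
    rw [Fintype.card_pi]; push_cast; rfl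
  calc ∑ a : ∀ i, A i, u j a * ∏ k, (∑ ρ : Equiv.Perm (A k), x k ρ (a k)) /
        (Fintype.card (Equiv.Perm (A k)) : ℝ)
      = ∑ a : ∀ i, A i, (∑ ρ : ∀ k, Equiv.Perm (A k),
          u j a * ∏ k, x k (ρ k) (a k)) /
          (Fintype.card (∀ k, Equiv.Perm (A k)) : ℝ) := by
        refine Finset.sum_congr rfl fun a _ => ?_
        rw [Finset.prod_div_distrib, ← hM]
        rw [show (∏ k, ∑ ρ : Equiv.Perm (A k), x k ρ (a k))
            = ∑ ρ : ∀ k, Equiv.Perm (A k), ∏ k, x k (ρ k) (a k) by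
          rw [Finset.prod_univ_sum]
          exact Finset.sum_congr (by simp [Fintype.piFinset_univ]) fun _ _ => rfl]
        rw [← mul_div_assoc, Finset.mul_sum]
    _ = (∑ ρ : ∀ k, Equiv.Perm (A k), ∑ a : ∀ i, A i,
          u j a * ∏ k, x k (ρ k) (a k)) /
          (Fintype.card (∀ k, Equiv.Perm (A k)) : ℝ) := by
        rw [← Finset.sum_div, Finset.sum_comm]
    _ = _ := rfl

lemma BR_avg (u : Fin n → (∀ i, A i) → ℝ)
    (x : ∀ k, Equiv.Perm (A k) → A k → ℝ) (i : Fin n) (b : A i) :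
    BR u (fun k c => (∑ ρ : Equiv.Perm (A k), x k ρ c) /
        (Fintype.card (Equiv.Perm (A k)) : ℝ)) i b
    = (∑ ρ : ∀ k, Equiv.Perm (A k), BR u (fun k => x k (ρ k)) i b) /
        (Fintype.card (∀ k, Equiv.Perm (A k)) : ℝ) := by
  unfold BR
  have h : Function.update (fun k c => (∑ ρ : Equiv.Perm (A k), x k ρ c) /
        (Fintype.card (Equiv.Perm (A k)) : ℝ)) i (pureStrat b)
      = fun k c => (∑ ρ : Equiv.Perm (A k),
          (Function.update x i (fun _ => pureStrat b)) k ρ c) /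
          (Fintype.card (Equiv.Perm (A k)) : ℝ) := by
    funext k c
    rcases eq_or_ne k i with rfl | h
    · rw [Function.update_self, Function.update_self, Finset.sum_const,
        Finset.card_univ, nsmul_eq_mul, mul_div_cancel_left₀]
      exact Nat.cast_ne_zero.mpr Fintype.card_ne_zero
    · rw [Function.update_of_ne h, Function.update_of_ne h]
  rw [h, EU_avg]
  congr 1
  refine Finset.sum_congr rfl fun ρ _ => ?_
  congr 1
  funext k
  rcases eq_or_ne k i with rfl | h
  · rw [Function.update_self, Function.update_self]
  · rw [Function.update_of_ne h, Function.update_of_ne h]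

lemma NEExpl_avg_le (u : Fin n → (∀ i, A i) → ℝ)
    (x : ∀ k, Equiv.Perm (A k) → A k → ℝ) :
    NEExpl u (fun k b => (∑ ρ : Equiv.Perm (A k), x k ρ b) /
        (Fintype.card (Equiv.Perm (A k)) : ℝ))
    ≤ (∑ ρ : ∀ k, Equiv.Perm (A k), NEExpl u (fun k => x k (ρ k))) /
        (Fintype.card (∀ k, Equiv.Perm (A k)) : ℝ) := by
  unfold NEExpl
  refine Finset.sup'_le _ _ fun i _ => Finset.sup'_le _ _ fun b _ => ?_
  rw [BR_avg, EU_avg, div_sub_div_same, ← Finset.sum_sub_distrib]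
  have hMpos : (0:ℝ) < (Fintype.card (∀ k, Equiv.Perm (A k)) : ℝ) := by
    exact_mod_cast Fintype.card_pos
  refine div_le_div_of_nonneg_right ?_ hMpos.le
  refine Finset.sum_le_sum fun ρ _ => ?_
  refine le_trans (Finset.le_sup'
    (fun c : A i => BR u (fun k => x k (ρ k)) i c - EU u (fun k => x k (ρ k)) i)
    (mem_univ b)) ?_
  exact Finset.le_sup' (fun i => univ.sup' Finset.univ_nonempty fun c : A i =>
    BR u (fun k => x k (ρ k)) i c - EU u (fun k => x k (ρ k)) i) (mem_univ i)

/-! ### Closed form for `Pall` -/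

lemma foldr_noteq (L : List (Fin n))
    (g : (Fin n → (∀ i, A i) → ℝ) → (∀ k, A k → ℝ))
    (u : Fin n → (∀ i, A i) → ℝ) (k : Fin n) (hk : k ∉ L) :
    (L.foldr (fun i h => Pproj i h) g) u k = g u k := by
  induction L with
  | nil => rfl
  | cons j L ih =>
    have hkj : k ≠ j := fun h => hk (by simp [h])
    have hkL : k ∉ L := fun h => hk (List.mem_cons_of_mem j h)
    simp only [List.foldr_cons]
    show Function.update _ j _ k = _
    rw [Function.update_of_ne hkj]
    exact ih hkL

lemma foldr_mem (L : List (Fin n))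
    (g : (Fin n → (∀ i, A i) → ℝ) → (∀ k, A k → ℝ))
    (u : Fin n → (∀ i, A i) → ℝ) (k : Fin n) (hk : k ∈ L) (hnd : L.Nodup) :
    (L.foldr (fun i h => Pproj i h) g) u k
      = fun b => (∑ ρ : Equiv.Perm (A k), g (permPayoff k ρ u) k (ρ b)) /
          (Fintype.card (Equiv.Perm (A k)) : ℝ) := by
  induction L with
  | nil => cases hk
  | cons j L ih =>
    simp only [List.foldr_cons]
    rcases eq_or_ne k j with rfl | h
    · show Function.update _ k _ k = _
      rw [Function.update_self]
      have hkL : k ∉ L := (List.nodup_cons.mp hnd).1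
      funext b
      congr 1
      refine Finset.sum_congr rfl fun ρ _ => ?_
      rw [foldr_noteq L g _ k hkL]
    · show Function.update _ j _ k = _
      rw [Function.update_of_ne h]
      exact ih (by rcases List.mem_cons.mp hk with h' | h' <;> [exact absurd h' h; exact h'])
        (List.nodup_cons.mp hnd).2

lemma Pall_apply (f : (Fin n → (∀ i, A i) → ℝ) → (∀ k, A k → ℝ))
    (u : Fin n → (∀ i, A i) → ℝ) (k : Fin n) :
    Pall f u k = fun b => (∑ ρ : Equiv.Perm (A k), f (permPayoff k ρ u) k (ρ b)) /
        (Fintype.card (Equiv.Perm (A k)) : ℝ) := by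
  exact foldr_mem _ f u k (List.mem_finRange k) (List.nodup_finRange n)

/-- for an opponent-permutation-invariant NE approximator `f` and a
permutation-invariant payoff distribution, the player-equivariance projection
`P f` has weakly smaller expected NE exploitability. -/
theorem equivariance_projection_decreases_expected_NE_exploitability
    (D : Measure (Fin n → (∀ i, A i) → ℝ)) [IsProbabilityMeasure D]
    (hD : ∀ (i : Fin n) (ρ : Equiv.Perm (A i)), D.map (permPayoff i ρ) = D)
    (hbound : ∀ᵐ u ∂D, ∀ j a, u j a ∈ Set.Icc (0:ℝ) 1)
    (f : (Fin n → (∀ i, A i) → ℝ) → (∀ k, A k → ℝ))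
    (hOPI : ∀ (u : Fin n → (∀ i, A i) → ℝ) (i : Fin n) (ρ : Equiv.Perm (A i))
      (j : Fin n), j ≠ i → f (permPayoff i ρ u) j = f u j)
    (h1 : Integrable (fun u => NEExpl u (Pall f u)) D)
    (h2 : Integrable (fun u => NEExpl u (f u)) D) :
    (∫ u, NEExpl u (Pall f u) ∂D) ≤ (∫ u, NEExpl u (f u) ∂D) := by
  classical
  set M : ℝ := (Fintype.card (∀ k, Equiv.Perm (A k)) : ℝ) with hMdef
  have hMpos : (0:ℝ) < M := by
    rw [hMdef]; exact_mod_cast (Fintype.card_pos : 0 < Fintype.card (∀ k, Equiv.Perm (A k)))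
  -- pointwise inequality
  have hpt : ∀ u, NEExpl u (Pall f u)
      ≤ (∑ ρ : ∀ k, Equiv.Perm (A k),
          NEExpl (PhiAll ρ u) (f (PhiAll ρ u))) / M := by
    intro u
    have hP : Pall f u = fun k b =>
        (∑ ρ : Equiv.Perm (A k), f (permPayoff k ρ u) k (ρ b)) /
          (Fintype.card (Equiv.Perm (A k)) : ℝ) :=
      funext fun k => Pall_apply f u k
    rw [hP]
    refine le_trans (NEExpl_avg_le u
      (fun k ρ b => f (permPayoff k ρ u) k (ρ b))) (le_of_eq ?_)
    congr 1
    refine Finset.sum_congr rfl fun ρ _ => ?_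
    have hτ : (fun k => (fun b => f (permPayoff k (ρ k) u) k ((ρ k) b)))
        = fun k c => (f (PhiAll ρ u)) k (ρ k c) := by
      funext k
      rw [f_coord f hOPI ρ u k]
    rw [show (fun k => (fun k ρ b => f (permPayoff k ρ u) k (ρ b)) k (ρ k))
        = fun k c => (f (PhiAll ρ u)) k (ρ k c) from hτ]
    exact NEExpl_perm u ρ (f (PhiAll ρ u))
  -- measure-theoretic part
  have hmapΦ : ∀ ρ : ∀ k, Equiv.Perm (A k), D.map (PhiAll ρ) = D :=
    fun ρ => map_PhiAll D hD ρ
  have hint : ∀ ρ : ∀ k, Equiv.Perm (A k),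
      Integrable (fun u => NEExpl (PhiAll ρ u) (f (PhiAll ρ u))) D := by
    intro ρ
    have h2' : Integrable (fun u => NEExpl u (f u)) (D.map (PhiAll ρ)) := by
      rw [hmapΦ ρ]; exact h2
    exact (integrable_map_measure h2'.aestronglyMeasurable
      (measurable_PhiAll ρ).aemeasurable).mp h2'
  have hieq : ∀ ρ : ∀ k, Equiv.Perm (A k),
      ∫ u, NEExpl (PhiAll ρ u) (f (PhiAll ρ u)) ∂D
        = ∫ u, NEExpl u (f u) ∂D := by
    intro ρ
    have h2' : Integrable (fun u => NEExpl u (f u)) (D.map (PhiAll ρ)) := by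
      rw [hmapΦ ρ]; exact h2
    conv_rhs => rw [← hmapΦ ρ]
    rw [integral_map (measurable_PhiAll ρ).aemeasurable h2'.aestronglyMeasurable]
  have hintsum : Integrable (fun u => (∑ ρ : ∀ k, Equiv.Perm (A k),
      NEExpl (PhiAll ρ u) (f (PhiAll ρ u))) / M) D :=
    (integrable_finset_sum _ fun ρ _ => hint ρ).div_const M
  calc ∫ u, NEExpl u (Pall f u) ∂D
      ≤ ∫ u, (∑ ρ : ∀ k, Equiv.Perm (A k),
          NEExpl (PhiAll ρ u) (f (PhiAll ρ u))) / M ∂D :=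
        integral_mono h1 hintsum hpt
    _ = (∑ ρ : ∀ k, Equiv.Perm (A k),
          ∫ u, NEExpl (PhiAll ρ u) (f (PhiAll ρ u)) ∂D) / M := by
        rw [integral_div, integral_finset_sum _ fun ρ _ => hint ρ]
    _ = (∑ _ρ : ∀ k, Equiv.Perm (A k), ∫ u, NEExpl u (f u) ∂D) / M := by
        rw [Finset.sum_congr rfl fun ρ _ => hieq ρ]
    _ = ∫ u, NEExpl u (f u) ∂D := by
        rw [Finset.sum_const, Finset.card_univ, nsmul_eq_mul, hMdef,
          mul_div_cancel_left₀]
        exact ne_of_gt hMpos
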